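/- Let R be a commutative ring and M an R-module. Then M is finitely presented if and only if there exist R-modules V₁ and V₂, an R-linear map u: V₂ → V₁, and an element t ∈ V₂ ⊗_R M such that for every commutative R-algebra S the sequence Hom_S(V₁ ⊗_R S, S) → Hom_S(V₂ ⊗_R S, S) → M ⊗_R S → 0 is exact, where the first map is precomposition with u ⊗ id_S and the second map is contraction against t (if t = Σ_k v_k ⊗ m_k it sends w to Σ_k w(v_k ⊗ 1)·(m_k ⊗ 1)). -/

import Mathlib

open TensorProduct

universe u

/-- Contraction against `t ∈ V₂ ⊗_R M`: it sends an `S`-linear form `w` on `V₂ ⊗_R S` to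
`Σ_k w(v_k ⊗ 1)·(m_k ⊗ 1) ∈ M ⊗_R S`, where `t = Σ_k v_k ⊗ m_k`. -/
noncomputable def contractAgainst (R V₂ M : Type u) [CommRing R]
    [AddCommGroup V₂] [Module R V₂] [AddCommGroup M] [Module R M]
    (t : V₂ ⊗[R] M) (S : Type u) [CommRing S] [Algebra R S]
    (w : (S ⊗[R] V₂) →ₗ[S] S) : S ⊗[R] M :=
  LinearMap.rTensor M ((w.restrictScalars R) ∘ₗ TensorProduct.mk R S V₂ 1) t

/-!
Since `Hom_S(S ⊗ V, S) = Hom_R(V, S)`, the condition says that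
`Hom_R(V₁, S) → Hom_R(V₂, S) → S ⊗ M → 0`, `a ↦ a ∘ u`, `φ ↦ (φ ⊗ 1) t`, is exact.

If `R^m --f--> R^n --π--> M → 0` is a presentation, take `u = fᵀ` and `t = ∑ eᵢ ⊗ π eᵢ`:
under `Hom(R^n, Q) ≅ Q ⊗ R^n` this sequence becomes `Q ⊗ R^m → Q ⊗ R^n → Q ⊗ M → 0`,
which is exact because `Q ⊗ -` is right exact.

Conversely, surjectivity for `S = R` shows that the finitely many right tensor factors of `t`
generate `M`. Choose a surjection `π : R^n → M` with kernel `K`. Exactness for `S = R` and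
`S = R^K` makes `R^K ⊗ M → M^K` injective, so the generic element `∑ⱼ (k ↦ kⱼ) ⊗ eⱼ` of
`R^K ⊗ R^n`, which dies in `R^K ⊗ M`, comes from `R^K ⊗ K'` for a finitely generated `K' ≤ K`;
evaluating it at each `k ∈ K` gives `k ∈ K'`.
-/
theorem Function.Exact.iff_of_ladder_equiv {A B C A' B' : Type*} [Zero C]
    {f : A → B} {g : B → C} {f' : A' → B'} {g' : B' → C}
    (e₁ : A' → A) (he₁ : Function.Surjective e₁) (e₂ : B' ≃ B)
    (h₁ : f ∘ e₁ = e₂ ∘ f') (h₂ : g ∘ e₂ = g') :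
    Function.Exact f g ↔ Function.Exact f' g' := by
  have hrange : Set.range f = e₂ '' Set.range f' := by
    rw [← he₁.range_comp, h₁, Set.range_comp]
  unfold Function.Exact
  rw [← e₂.forall_congr_right, hrange, ← h₂]
  simp only [Function.comp_apply, e₂.injective.mem_set_image]

theorem Function.exact_and_surjective_iff_of_ladder_equiv {A B C A' B' : Type*} [Zero C]
    {f : A → B} {g : B → C} {f' : A' → B'} {g' : B' → C}
    (e₁ : A' → A) (he₁ : Function.Surjective e₁) (e₂ : B' ≃ B)
    (h₁ : f ∘ e₁ = e₂ ∘ f') (h₂ : g ∘ e₂ = g') :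
    Function.Exact f g ∧ Function.Surjective g ↔ Function.Exact f' g' ∧ Function.Surjective g' :=
  and_congr (Function.Exact.iff_of_ladder_equiv e₁ he₁ e₂ h₁ h₂) (by rw [← h₂, e₂.surjective_comp])

theorem TensorProduct.lid_lTensor {R M N : Type*} [CommSemiring R] [AddCommMonoid M] [Module R M]
    [AddCommMonoid N] [Module R N] (g : M →ₗ[R] N) (y : R ⊗[R] M) :
    TensorProduct.lid R N (g.lTensor R y) = g (TensorProduct.lid R M y) := by
  induction y using TensorProduct.induction_on <;> simp_all

theorem LinearMap.rTensor_lTensor_apply {R M N P Q : Type*} [CommSemiring R]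
    [AddCommMonoid M] [Module R M] [AddCommMonoid N] [Module R N]
    [AddCommMonoid P] [Module R P] [AddCommMonoid Q] [Module R Q]
    (f : M →ₗ[R] P) (g : N →ₗ[R] Q) (x : M ⊗[R] N) :
    f.rTensor Q (g.lTensor M x) = g.lTensor P (f.rTensor N x) := by
  rw [← comp_apply, rTensor_comp_lTensor, ← lTensor_comp_rTensor, comp_apply]

def DualRightExact {R V₁ V₂ M : Type*} [CommRing R] [AddCommGroup V₁] [Module R V₁]
    [AddCommGroup V₂] [Module R V₂] [AddCommGroup M] [Module R M]
    (u : V₂ →ₗ[R] V₁) (t : V₂ ⊗[R] M) (Q : Type*) [AddCommGroup Q] [Module R Q] : Prop :=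
  Function.Exact (fun a : V₁ →ₗ[R] Q => a ∘ₗ u) (fun φ : V₂ →ₗ[R] Q => φ.rTensor M t) ∧
    Function.Surjective (fun φ : V₂ →ₗ[R] Q => φ.rTensor M t)

section BaseChange

variable {R V₁ V₂ M : Type u} [CommRing R] [AddCommGroup V₁] [Module R V₁]
  [AddCommGroup V₂] [Module R V₂] [AddCommGroup M] [Module R M]
  (S : Type u) [CommRing S] [Algebra R S]

theorem contractAgainst_liftBaseChange (t : V₂ ⊗[R] M) (φ : V₂ →ₗ[R] S) :
    contractAgainst R V₂ M t S (φ.liftBaseChange S) = φ.rTensor M t := by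
  unfold contractAgainst
  congr 2
  ext v
  simp

theorem LinearMap.liftBaseChange_comp_baseChange (u : V₂ →ₗ[R] V₁) (a : V₁ →ₗ[R] S) :
    a.liftBaseChange S ∘ₗ u.baseChange S = (a ∘ₗ u).liftBaseChange S := by
  ext v
  simp

theorem exact_contractAgainst_iff_dualRightExact (u : V₂ →ₗ[R] V₁) (t : V₂ ⊗[R] M) :
    Function.Exact (fun w' : (S ⊗[R] V₁) →ₗ[S] S => w' ∘ₗ u.baseChange S)
        (contractAgainst R V₂ M t S) ∧ Function.Surjective (contractAgainst R V₂ M t S) ↔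
      DualRightExact u t S :=
  Function.exact_and_surjective_iff_of_ladder_equiv (LinearMap.liftBaseChangeEquiv S)
    (LinearMap.liftBaseChangeEquiv S).surjective (LinearMap.liftBaseChangeEquiv S).toEquiv
    (funext (LinearMap.liftBaseChange_comp_baseChange S u)) (funext (contractAgainst_liftBaseChange S t))

end BaseChange

noncomputable def homPiEquivTensor (R ι Q : Type*) [CommRing R] [Fintype ι] [DecidableEq ι]
    [AddCommGroup Q] [Module R Q] : ((ι → R) →ₗ[R] Q) ≃ₗ[R] Q ⊗[R] (ι → R) :=
  (Module.piEquiv ι R Q).symm ≪≫ₗ (TensorProduct.piScalarRight R R Q ι).symm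

section FreePresentation

variable {R : Type*} [CommRing R] {ι ι' : Type*} [Fintype ι] [DecidableEq ι]
  [Fintype ι'] [DecidableEq ι']

theorem homPiEquivTensor_apply {Q : Type*} [AddCommGroup Q] [Module R Q] (φ : (ι → R) →ₗ[R] Q) :
    homPiEquivTensor R ι Q φ = ∑ i, φ (Pi.single i 1) ⊗ₜ Pi.single i 1 := by
  rw [homPiEquivTensor, LinearEquiv.trans_apply,
    ← Finset.univ_sum_single ((Module.piEquiv ι R Q).symm φ)]
  simp [piScalarRight_symm_single, Module.piEquiv]

theorem homPiEquivTensor_comp {Q Q' : Type*} [AddCommGroup Q] [Module R Q]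
    [AddCommGroup Q'] [Module R Q'] (g : Q →ₗ[R] Q') (φ : (ι → R) →ₗ[R] Q) :
    homPiEquivTensor R ι Q' (g ∘ₗ φ) = g.rTensor (ι → R) (homPiEquivTensor R ι Q φ) := by
  simp [homPiEquivTensor_apply]

/-- The transpose of `f`, characterised by `(fᵀ ⊗ 1)(∑ᵢ eᵢ ⊗ eᵢ) = (1 ⊗ f)(∑ⱼ eⱼ ⊗ eⱼ)`. -/
noncomputable def piTranspose (f : (ι' → R) →ₗ[R] (ι → R)) : (ι → R) →ₗ[R] (ι' → R) :=
  (homPiEquivTensor R ι (ι' → R)).symm (f.lTensor _ (homPiEquivTensor R ι' _ LinearMap.id))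

theorem homPiEquivTensor_comp_piTranspose {Q : Type*} [AddCommGroup Q] [Module R Q]
    (f : (ι' → R) →ₗ[R] (ι → R)) (a : (ι' → R) →ₗ[R] Q) :
    homPiEquivTensor R ι Q (a ∘ₗ piTranspose f) = f.lTensor Q (homPiEquivTensor R ι' Q a) := by
  rw [homPiEquivTensor_comp, piTranspose, LinearEquiv.apply_symm_apply,
    LinearMap.rTensor_lTensor_apply, ← homPiEquivTensor_comp, LinearMap.comp_id]

theorem rTensor_lTensor_homPiEquivTensor_id {M Q : Type*} [AddCommGroup M] [Module R M]
    [AddCommGroup Q] [Module R Q] (π : (ι → R) →ₗ[R] M) (φ : (ι → R) →ₗ[R] Q) :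
    φ.rTensor M (π.lTensor _ (homPiEquivTensor R ι _ LinearMap.id)) =
      π.lTensor Q (homPiEquivTensor R ι Q φ) := by
  rw [LinearMap.rTensor_lTensor_apply, ← homPiEquivTensor_comp, LinearMap.comp_id]

theorem dualRightExact_of_exact {M : Type*} [AddCommGroup M] [Module R M]
    {f : (ι' → R) →ₗ[R] (ι → R)} {π : (ι → R) →ₗ[R] M} (hfπ : Function.Exact f π)
    (hπ : Function.Surjective π) (Q : Type*) [AddCommGroup Q] [Module R Q] :
    DualRightExact (piTranspose f) (π.lTensor _ (homPiEquivTensor R ι _ LinearMap.id)) Q :=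
  (Function.exact_and_surjective_iff_of_ladder_equiv (homPiEquivTensor R ι' Q)
    (homPiEquivTensor R ι' Q).surjective (homPiEquivTensor R ι Q).toEquiv
    (funext (homPiEquivTensor_comp_piTranspose f)).symm
    (funext (rTensor_lTensor_homPiEquivTensor_id π)).symm).1
    ⟨lTensor_exact Q hfπ hπ, π.lTensor_surjective Q hπ⟩

end FreePresentation

section Converse

variable {R V₁ V₂ M : Type*} [CommRing R] [AddCommGroup V₁] [Module R V₁]
  [AddCommGroup V₂] [Module R V₂] [AddCommGroup M] [Module R M]

theorem Module.Finite.of_surjective_rTensor (t : V₂ ⊗[R] M)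
    (h : Function.Surjective (fun φ : V₂ →ₗ[R] R => φ.rTensor M t)) : Module.Finite R M := by
  obtain ⟨N, hN, ht⟩ := exists_finite_submodule_right_of_setFinite {t} (Set.finite_singleton t)
  obtain ⟨t', rfl⟩ := ht rfl
  refine Module.Finite.of_surjective N.subtype fun x => ?_
  obtain ⟨φ, hφ⟩ := h (1 ⊗ₜ x)
  beta_reduce at hφ
  refine ⟨TensorProduct.lid R N (φ.rTensor N t'), ?_⟩
  rw [← lid_lTensor, ← LinearMap.rTensor_lTensor_apply, hφ, lid_tmul, one_smul]

theorem DualRightExact.eq_zero_of_forall_rTensor_proj_eq_zero {κ : Type*} {u : V₂ →ₗ[R] V₁}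
    {t : V₂ ⊗[R] M} (hR : DualRightExact u t R) (hκ : DualRightExact u t (κ → R))
    (x : (κ → R) ⊗[R] M) (hx : ∀ k, (LinearMap.proj k : (κ → R) →ₗ[R] R).rTensor M x = 0) :
    x = 0 := by
  obtain ⟨φ, rfl⟩ := hκ.2 x
  have (k : κ) : ∃ a : V₁ →ₗ[R] R, a ∘ₗ u = LinearMap.proj k ∘ₗ φ :=
    (hR.1 _).1 ((LinearMap.rTensor_comp_apply ..).trans (hx k))
  choose a ha using this
  exact (hκ.1 φ).2 ⟨LinearMap.pi a, by ext v k; exact congr($(ha k) v)⟩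

theorem fg_ker_of_forall_rTensor_proj_eq_zero {ι : Type*} [Fintype ι] [DecidableEq ι]
    (π : (ι → R) →ₗ[R] M) (hπ : Function.Surjective π)
    (h : ∀ x : (LinearMap.ker π → R) ⊗[R] M,
      (∀ k, (LinearMap.proj k : (LinearMap.ker π → R) →ₗ[R] R).rTensor M x = 0) → x = 0) :
    (LinearMap.ker π).FG := by
  set K := LinearMap.ker π
  let ζ : (K → R) ⊗[R] (ι → R) := ∑ j, (fun k : K => (k : ι → R) j) ⊗ₜ Pi.single j 1
  have hζ (k : ι → R) (hk : k ∈ K) :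
      TensorProduct.lid R _ ((LinearMap.proj ⟨k, hk⟩ : (K → R) →ₗ[R] R).rTensor _ ζ) = k := by
    simpa [ζ] using (pi_eq_sum_univ' k).symm
  have hζ0 : π.lTensor _ ζ = 0 := h _ fun k => by
    apply (TensorProduct.lid R M).injective
    rw [LinearMap.rTensor_lTensor_apply, lid_lTensor, hζ k k.2, map_zero]
    exact k.2
  obtain ⟨η, hη⟩ := (lTensor_exact (K → R) (LinearMap.exact_subtype_ker_map π) hπ ζ).1 hζ0
  obtain ⟨N, hN, hηN⟩ := exists_finite_submodule_right_of_setFinite {η} (Set.finite_singleton η)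
  obtain ⟨η', rfl⟩ := hηN rfl
  suffices K = N.map K.subtype from this ▸ (Module.Finite.iff_fg.1 hN).map _
  refine le_antisymm (fun k hk => ?_) (Submodule.map_subtype_le K N)
  rw [← hζ k hk, ← hη, ← LinearMap.lTensor_comp_apply, LinearMap.rTensor_lTensor_apply,
    lid_lTensor]
  exact ⟨_, Submodule.coe_mem _, rfl⟩

end Converse

theorem Module.finitePresentation_of_forall_dualRightExact {R V₁ V₂ M : Type u} [CommRing R]
    [AddCommGroup V₁] [Module R V₁] [AddCommGroup V₂] [Module R V₂] [AddCommGroup M] [Module R M]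
    (u : V₂ →ₗ[R] V₁) (t : V₂ ⊗[R] M)
    (h : ∀ (S : Type u) [CommRing S] [Algebra R S], DualRightExact u t S) :
    Module.FinitePresentation R M := by
  have : Module.Finite R M := .of_surjective_rTensor t (h R).2
  obtain ⟨n, π, hπ⟩ := Module.Finite.exists_fin' R M
  exact Module.finitePresentation_of_free_of_surjective π hπ <|
    fg_ker_of_forall_rTensor_proj_eq_zero π hπ fun x =>
      (h R).eq_zero_of_forall_rTensor_proj_eq_zero (h _) x

/-- `M` is a finitely presented `R`-module iff there exist `R`-modules `V₁, V₂`, a linear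
map `u : V₂ → V₁` and an element `t ∈ V₂ ⊗_R M` such that
`Hom_S(V₁ ⊗_R S, S) → Hom_S(V₂ ⊗_R S, S) → M ⊗_R S → 0` is exact for every commutative
`R`-algebra `S`. -/
theorem finitePresentation_iff_dual_exact
    (R M : Type u) [CommRing R] [AddCommGroup M] [Module R M] :
    Module.FinitePresentation R M ↔
      ∃ (V₁ : Type u) (_ : AddCommGroup V₁) (_ : Module R V₁)
        (V₂ : Type u) (_ : AddCommGroup V₂) (_ : Module R V₂)
        (u : V₂ →ₗ[R] V₁) (t : V₂ ⊗[R] M),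
        ∀ (S : Type u) [CommRing S] [Algebra R S],
          (∀ w : (S ⊗[R] V₂) →ₗ[S] S,
            contractAgainst R V₂ M t S w = 0 ↔
              w ∈ Set.range (fun w' : (S ⊗[R] V₁) →ₗ[S] S => w' ∘ₗ u.baseChange S)) ∧
          Function.Surjective (fun w : (S ⊗[R] V₂) →ₗ[S] S => contractAgainst R V₂ M t S w) := by
  constructor
  · intro
    obtain ⟨n, m, π, f, hπ, hfπ⟩ := Module.FinitePresentation.exists_fin' R M
    exact ⟨_, _, _, _, _, _, piTranspose f, π.lTensor _ (homPiEquivTensor R (Fin n) _ LinearMap.id),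
      fun S _ _ => (exact_contractAgainst_iff_dualRightExact S _ _).2
        (dualRightExact_of_exact hfπ hπ S)⟩
  · rintro ⟨V₁, _, _, V₂, _, _, u, t, h⟩
    exact Module.finitePresentation_of_forall_dualRightExact u t fun S _ _ =>
      (exact_contractAgainst_iff_dualRightExact S u t).1 (h S)
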